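/- The composition of two involutive lattice maps gives the d-P(A₁^{(1)*}) action: if (φ₁)* fixes H_g, sends Eᵢ ↦ H_g - Eᵢ and H_f ↦ H_f + 4H_g - E, and (φ₂)* fixes H_f, sends Eᵢ ↦ H_f - Eᵢ and H_g ↦ H_g + 4H_f - E, then (φ₂)* ∘ (φ₁)* sends H_f ↦ 9H_f+4H_g-3E, H_g ↦ 4H_f+H_g-E, Eᵢ ↦ 3H_f+H_g-E+Eᵢ; moreover each (φⱼ)* preserves the intersection form and each is an involution. -/
import Mathlib


namespace DPA1Involutions

def Hf : Fin 10 → ℤ := Pi.single 0 1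
def Hg : Fin 10 → ℤ := Pi.single 1 1
def E (k : Fin 8) : Fin 10 → ℤ := Pi.single k.succ.succ 1

/-- The intersection form. -/
def inter (x y : Fin 10 → ℤ) : ℤ :=
  x 0 * y 1 + x 1 * y 0 - ∑ k : Fin 8, x k.succ.succ * y k.succ.succ

/-- `E = E₁ + ⋯ + E₈`. -/
def Esum : Fin 10 → ℤ := ∑ k : Fin 8, E k

/-- `(φ₁)*`: fixes `H_g`, sends `Eᵢ ↦ H_g - Eᵢ` and `H_f ↦ H_f + 4H_g - E`. -/
def φ₁ (x : Fin 10 → ℤ) : Fin 10 → ℤ :=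
  x 0 • (Hf + 4 • Hg - Esum) + x 1 • Hg + ∑ k : Fin 8, x k.succ.succ • (Hg - E k)

/-- `(φ₂)*`: fixes `H_f`, sends `Eᵢ ↦ H_f - Eᵢ` and `H_g ↦ H_g + 4H_f - E`. -/
def φ₂ (x : Fin 10 → ℤ) : Fin 10 → ℤ :=
  x 0 • Hf + x 1 • (4 • Hf + Hg - Esum) + ∑ k : Fin 8, x k.succ.succ • (Hf - E k)

set_option maxHeartbeats 4000000

lemma Hf_apply (i : Fin 10) : Hf i = if i = 0 then 1 else 0 := Pi.single_apply _ _ _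
lemma Hg_apply (i : Fin 10) : Hg i = if i = 1 then 1 else 0 := Pi.single_apply _ _ _
lemma E_apply (k : Fin 8) (i : Fin 10) : E k i = if i = k.succ.succ then 1 else 0 := by
  rw [E, Pi.single_apply]
lemma Esum_apply (i : Fin 10) :
    Esum i = if i = 0 ∨ i = 1 then 0 else 1 := by
  rw [Esum]
  simp only [Finset.sum_apply, E_apply, Fin.sum_univ_eight]
  fin_cases i <;> decide

lemma ss0 : (0:Fin 8).succ.succ = (2:Fin 10) := rfl
lemma ss1 : (1:Fin 8).succ.succ = (3:Fin 10) := rfl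
lemma ss2 : (2:Fin 8).succ.succ = (4:Fin 10) := rfl
lemma ss3 : (3:Fin 8).succ.succ = (5:Fin 10) := rfl
lemma ss4 : (4:Fin 8).succ.succ = (6:Fin 10) := rfl
lemma ss5 : (5:Fin 8).succ.succ = (7:Fin 10) := rfl
lemma ss6 : (6:Fin 8).succ.succ = (8:Fin 10) := rfl
lemma ss7 : (7:Fin 8).succ.succ = (9:Fin 10) := rfl

lemma φ₁_apply (x : Fin 10 → ℤ) (i : Fin 10) :
    φ₁ x i = if i = 0 then x 0
      else if i = 1 then 4 * x 0 + x 1 + (x 2 + x 3 + x 4 + x 5 + x 6 + x 7 + x 8 + x 9)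
      else - x 0 - x i := by
  rw [φ₁]
  simp only [Finset.sum_apply, Pi.add_apply, Pi.sub_apply, Pi.smul_apply, smul_eq_mul,
    Hf_apply, Hg_apply, E_apply, Esum_apply, Fin.sum_univ_eight,
    ss0, ss1, ss2, ss3, ss4, ss5, ss6, ss7]
  fin_cases i <;> simp (config := { decide := true }) <;> ring

lemma φ₂_apply (x : Fin 10 → ℤ) (i : Fin 10) :
    φ₂ x i = if i = 0 then x 0 + 4 * x 1 + (x 2 + x 3 + x 4 + x 5 + x 6 + x 7 + x 8 + x 9)
      else if i = 1 then x 1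
      else - x 1 - x i := by
  rw [φ₂]
  simp only [Finset.sum_apply, Pi.add_apply, Pi.sub_apply, Pi.smul_apply, smul_eq_mul,
    Hf_apply, Hg_apply, E_apply, Esum_apply, Fin.sum_univ_eight,
    ss0, ss1, ss2, ss3, ss4, ss5, ss6, ss7]
  fin_cases i <;> simp (config := { decide := true }) <;> ring

lemma c1 : φ₂ (φ₁ Hf) = 9 • Hf + 4 • Hg - 3 • Esum := by decide
lemma c2 : φ₂ (φ₁ Hg) = 4 • Hf + Hg - Esum := by decide
lemma c3 : ∀ k : Fin 8, φ₂ (φ₁ (E k)) = 3 • Hf + Hg - Esum + E k := by decide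
lemma c4 : ∀ x y : Fin 10 → ℤ, inter (φ₁ x) (φ₁ y) = inter x y := by
  intro x y
  rw [inter, inter]
  simp only [φ₁_apply, Fin.sum_univ_eight, ss0, ss1, ss2, ss3, ss4, ss5, ss6, ss7]
  simp (config := { decide := true }) only [reduceIte]
  ring
lemma c5 : ∀ x y : Fin 10 → ℤ, inter (φ₂ x) (φ₂ y) = inter x y := by
  intro x y
  rw [inter, inter]
  simp only [φ₂_apply, Fin.sum_univ_eight, ss0, ss1, ss2, ss3, ss4, ss5, ss6, ss7]
  simp (config := { decide := true }) only [reduceIte]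
  ring
lemma c6 : ∀ x : Fin 10 → ℤ, φ₁ (φ₁ x) = x := by
  intro x
  funext i
  simp only [φ₁_apply]
  fin_cases i <;> simp (config := { decide := true }) <;> ring
lemma c7 : ∀ x : Fin 10 → ℤ, φ₂ (φ₂ x) = x := by
  intro x
  funext i
  simp only [φ₂_apply]
  fin_cases i <;> simp (config := { decide := true }) <;> ring

/-- The composition `(φ₂)* ∘ (φ₁)*` is the d-P(A₁⁽¹⁾*) action on the Picard lattice;
moreover each `(φⱼ)*` preserves the intersection form and is an involution. -/
theorem composition_of_involutions :
    φ₂ (φ₁ Hf) = 9 • Hf + 4 • Hg - 3 • Esum ∧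
    φ₂ (φ₁ Hg) = 4 • Hf + Hg - Esum ∧
    (∀ k : Fin 8, φ₂ (φ₁ (E k)) = 3 • Hf + Hg - Esum + E k) ∧
    (∀ x y : Fin 10 → ℤ, inter (φ₁ x) (φ₁ y) = inter x y) ∧
    (∀ x y : Fin 10 → ℤ, inter (φ₂ x) (φ₂ y) = inter x y) ∧
    (∀ x : Fin 10 → ℤ, φ₁ (φ₁ x) = x) ∧
    (∀ x : Fin 10 → ℤ, φ₂ (φ₂ x) = x) :=
  ⟨c1, c2, c3, c4, c5, c6, c7⟩

end DPA1Involutions
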